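/- arXiv:2103.00039 — 2 statements merged into one kernel-verified Lean document; each statement's English description precedes it below -/
import Mathlib

section
/- Let φ₁ : C → ℝ be a convex function on a convex set C ⊆ ℝ^p with minimizer θ₁ ∈ C. Let Ψ : C → ℝ be convex such that φ₂ = φ₁ + Ψ is 1-strongly convex with respect to the ℓ₂ norm, and let θ₂ ∈ C be a minimizer of φ₂. Then for any subgradient b of Ψ at θ₁, we have ‖θ₁ − θ₂‖₂ ≤ ‖b‖₂. -/
/-!
Tilting `φ₁ + Ψ` by the linear function `-⟪b, ·⟫` keeps it 1-strongly convex and makes `θ₁` a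
minimizer, since `θ₁` minimizes `φ₁` and `b` is a subgradient of `Ψ` at `θ₁`. A strongly convex
function grows quadratically away from a minimizer; applied to `φ₁ + Ψ` at `θ₂` and to the tilted
function at `θ₁`, this gives `‖θ₁ - θ₂‖² ≤ ⟪b, θ₁ - θ₂⟫ ≤ ‖b‖ ‖θ₁ - θ₂‖`.
-/

open RealInnerProductSpace Filter Topology Set

section NormedSpace

variable {E : Type*} [NormedAddCommGroup E] [NormedSpace ℝ E] {s : Set E} {m : ℝ} {f g : E → ℝ}

lemma StrongConvexOn.add_convexOn (hf : StrongConvexOn s m f) (hg : ConvexOn ℝ s g) :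
    StrongConvexOn s m (f + g) := by
  simpa [StrongConvexOn] using hf.add (uniformConvexOn_zero.2 hg)

lemma StrongConvexOn.add_sq_norm_sub_le_of_isMinOn {x y : E} (hf : StrongConvexOn s m f)
    (hxs : x ∈ s) (hx : IsMinOn f s x) (hy : y ∈ s) : f x + m / 2 * ‖y - x‖ ^ 2 ≤ f y := by
  -- compare `f x` with `f` at `t • y + (1 - t) • x`, then let `t → 0`
  have hgrowth : ∀ t ∈ Ioo (0 : ℝ) 1, (1 - t) * (m / 2 * ‖y - x‖ ^ 2) ≤ f y - f x := by
    rintro t ⟨ht₀, ht₁⟩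
    have hsum : t + (1 - t) = 1 := add_sub_cancel t 1
    have hmin : f x ≤ f (t • y + (1 - t) • x) :=
      hx (hf.1 hy hxs ht₀.le (sub_nonneg.2 ht₁.le) hsum)
    have hconv := hf.2 hy hxs ht₀.le (sub_nonneg.2 ht₁.le) hsum
    simp only [smul_eq_mul] at hconv
    refine le_of_mul_le_mul_left ?_ ht₀
    nlinarith
  have hlim : Tendsto (fun t : ℝ => (1 - t) * (m / 2 * ‖y - x‖ ^ 2)) (𝓝[>] 0)
      (𝓝 (m / 2 * ‖y - x‖ ^ 2)) := by
    have hcont : Continuous (fun t : ℝ => (1 - t) * (m / 2 * ‖y - x‖ ^ 2)) := by fun_prop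
    simpa using hcont.continuousWithinAt.tendsto (x := 0) (s := Ioi 0)
  have := le_of_tendsto hlim (eventually_of_mem (Ioo_mem_nhdsGT one_pos) hgrowth)
  linarith

end NormedSpace

lemma StrongConvexOn.sub_inner {E : Type*} [NormedAddCommGroup E] [InnerProductSpace ℝ E]
    {s : Set E} {m : ℝ} {f : E → ℝ} (hf : StrongConvexOn s m f) (b : E) :
    StrongConvexOn s m (fun x => f x - ⟪b, x⟫) :=
  hf.add_convexOn ((-innerₛₗ ℝ b).convexOn hf.1)

theorem perturbation_lemma_general {p : ℕ} (C : Set (EuclideanSpace ℝ (Fin p)))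
    (φ₁ Ψ : EuclideanSpace ℝ (Fin p) → ℝ)
    (hφ₂ : StrongConvexOn C 1 (fun θ => φ₁ θ + Ψ θ))
    (θ₁ θ₂ : EuclideanSpace ℝ (Fin p))
    (hθ₁C : θ₁ ∈ C) (hθ₁min : ∀ y ∈ C, φ₁ θ₁ ≤ φ₁ y)
    (hθ₂C : θ₂ ∈ C) (hθ₂min : ∀ y ∈ C, φ₁ θ₂ + Ψ θ₂ ≤ φ₁ y + Ψ y)
    (b : EuclideanSpace ℝ (Fin p))
    (hb : ∀ y ∈ C, Ψ θ₁ + ⟪b, y - θ₁⟫ ≤ Ψ y) :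
    ‖θ₁ - θ₂‖ ≤ ‖b‖ := by
  have htilt_min : IsMinOn (fun θ => φ₁ θ + Ψ θ - ⟪b, θ⟫) C θ₁ := isMinOn_iff.2 fun y hy => by
    have hsub := hb y hy
    rw [inner_sub_right] at hsub
    linarith [hθ₁min y hy]
  have growth₂ := hφ₂.add_sq_norm_sub_le_of_isMinOn hθ₂C hθ₂min hθ₁C
  have growth₁ := (hφ₂.sub_inner b).add_sq_norm_sub_le_of_isMinOn hθ₁C htilt_min hθ₂C
  have hsq : ‖θ₁ - θ₂‖ ^ 2 ≤ ⟪b, θ₁ - θ₂⟫ := by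
    rw [norm_sub_rev θ₂] at growth₁
    rw [inner_sub_right]
    linarith
  nlinarith [real_inner_le_norm b (θ₁ - θ₂), norm_nonneg b, norm_nonneg (θ₁ - θ₂)]

/-- Perturbation lemma (Lemma 7 of McMahan'17, restated): if `φ₁` is convex on `C` with
minimizer `θ₁`, `Ψ` is convex with subgradient `b` at `θ₁`, and `φ₂ = φ₁ + Ψ` is
1-strongly convex on `C` with minimizer `θ₂`, then `‖θ₁ - θ₂‖ ≤ ‖b‖`. -/
theorem perturbation_lemma {p : ℕ} (C : Set (EuclideanSpace ℝ (Fin p)))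
    (hC : Convex ℝ C)
    (φ₁ Ψ : EuclideanSpace ℝ (Fin p) → ℝ)
    (hφ₁ : ConvexOn ℝ C φ₁) (hΨ : ConvexOn ℝ C Ψ)
    (hφ₂ : StrongConvexOn C 1 (fun θ => φ₁ θ + Ψ θ))
    (θ₁ θ₂ : EuclideanSpace ℝ (Fin p))
    (hθ₁C : θ₁ ∈ C) (hθ₁min : ∀ y ∈ C, φ₁ θ₁ ≤ φ₁ y)
    (hθ₂C : θ₂ ∈ C) (hθ₂min : ∀ y ∈ C, φ₁ θ₂ + Ψ θ₂ ≤ φ₁ y + Ψ y)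
    (b : EuclideanSpace ℝ (Fin p))
    (hb : ∀ y ∈ C, Ψ θ₁ + ⟪b, y - θ₁⟫ ≤ Ψ y) :
    ‖θ₁ - θ₂‖ ≤ ‖b‖ :=
  perturbation_lemma_general C φ₁ Ψ hφ₂ θ₁ θ₂ hθ₁C hθ₁min hθ₂C hθ₂min b hb
end

section
/- Let (θ_t^{NoisySGD}) satisfy θ_0 = 0 and θ_{t+1} = θ_t − η(g_t + a_t), where a_t = b_t − b_{t−1} with b_0 arbitrary given b_{−1} = 0. Let (θ_t^{DPFTRL}) satisfy θ_{t+1} = argmin_{θ ∈ ℝ^p} ⟨∑_{i=0}^t g_i + b_t, θ⟩ + (λ/2)‖θ‖₂² with λ = 1/η, where both recursions use the same sequence (g_t). Then θ_t^{NoisySGD} = θ_t^{DPFTRL} for all t ≥ 1. -/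
open Finset RealInnerProductSpace

lemma argmin_quad {E : Type*} [NormedAddCommGroup E] [InnerProductSpace ℝ E]
    (η : ℝ) (hη : 0 < η) (v x : E)
    (h : ∀ θ : E, ⟪v, x⟫ + ((1 / η) / 2) * ‖x‖ ^ 2 ≤ ⟪v, θ⟫ + ((1 / η) / 2) * ‖θ‖ ^ 2) :
    x = -η • v := by
  have h1 := h ((-η) • v)
  rw [real_inner_smul_right, norm_smul] at h1
  have hv : ⟪v, v⟫ = ‖v‖ ^ 2 := real_inner_self_eq_norm_sq v
  have habs : |(-η)| = η := by rw [abs_neg, abs_of_pos hη]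
  rw [Real.norm_eq_abs, habs] at h1
  have hexp : ‖x + η • v‖ ^ 2 = ‖x‖ ^ 2 + 2 * (η * ⟪v, x⟫) + η ^ 2 * ‖v‖ ^ 2 := by
    rw [norm_add_sq_real, real_inner_smul_right, real_inner_comm, norm_smul,
      Real.norm_eq_abs, abs_of_pos hη]
    ring
  rw [hv] at h1
  have hne : η ≠ 0 := ne_of_gt hη
  have h2 : 2 * η * ⟪v, x⟫ + ‖x‖ ^ 2 ≤ -(η ^ 2 * ‖v‖ ^ 2) := by
    have h3 := mul_le_mul_of_nonneg_left h1 (by positivity : (0:ℝ) ≤ 2 * η)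
    rw [mul_add, mul_add] at h3
    have e1 : 2 * η * (1 / η / 2 * ‖x‖ ^ 2) = ‖x‖ ^ 2 := by field_simp
    have e2 : 2 * η * (1 / η / 2 * (η * ‖v‖) ^ 2) = η ^ 2 * ‖v‖ ^ 2 := by
      field_simp
    rw [e1, e2] at h3
    nlinarith [h3]
  have hle : ‖x + η • v‖ ^ 2 ≤ 0 := by
    rw [hexp]; nlinarith [h2]
  have : ‖x + η • v‖ = 0 := by
    have := sq_nonneg ‖x + η • v‖
    nlinarith [norm_nonneg (x + η • v)]
  have hz : x + η • v = 0 := by rwa [norm_eq_zero] at this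
  have : x = -(η • v) := eq_neg_of_add_eq_zero_left hz
  simpa [neg_smul] using this

/-- Equivalence of Noisy-SGD with correlated noise `aₜ = bₜ − bₜ₋₁` and DP-FTRL
(Theorem: unconstrained case, with `λ = 1/η`): the iterates coincide for all `t ≥ 1`. -/
theorem noisySGD_eq_dpFTRL {p : ℕ} (η : ℝ) (hη : 0 < η)
    (g b a θN θF : ℕ → EuclideanSpace ℝ (Fin p))
    (ha0 : a 0 = b 0)                               -- `a₀ = b₀ − b₋₁` with `b₋₁ = 0`
    (ha : ∀ t, a (t + 1) = b (t + 1) - b t)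
    (hN0 : θN 0 = 0)
    (hN : ∀ t, θN (t + 1) = θN t - η • (g t + a t))
    (hF : ∀ t, ∀ θ : EuclideanSpace ℝ (Fin p),
      ⟪(∑ i ∈ range (t + 1), g i) + b t, θF (t + 1)⟫ + ((1 / η) / 2) * ‖θF (t + 1)‖ ^ 2 ≤
        ⟪(∑ i ∈ range (t + 1), g i) + b t, θ⟫ + ((1 / η) / 2) * ‖θ‖ ^ 2) :
    ∀ t, 1 ≤ t → θN t = θF t := by
  -- θF (t+1) is the explicit minimizer
  have hFval : ∀ t, θF (t + 1) = -η • ((∑ i ∈ range (t + 1), g i) + b t) := fun t =>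
    argmin_quad η hη _ _ (hF t)
  -- θN (t+1) equals the same expression, by induction (telescoping)
  have hNval : ∀ t, θN (t + 1) = -η • ((∑ i ∈ range (t + 1), g i) + b t) := by
    intro t
    induction t with
    | zero =>
      rw [hN 0, hN0, ha0, Finset.sum_range_one]
      module
    | succ n ih =>
      rw [hN (n + 1), ih, ha n, Finset.sum_range_succ g (n + 1)]
      module
  intro t ht
  obtain ⟨n, rfl⟩ := Nat.exists_eq_add_of_le ht
  rw [add_comm 1 n, hNval n, hFval n]
end
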